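/- Let G=(V,E) be an undirected connected simple locally finite graph and let x,y be neighboring vertices. Then κ(x,y) ≤ ♯(x,y)/(d_x∨d_y), where d_x∨d_y = max{d_x,d_y}. -/
import Mathlib


open SimpleGraph Finset

variable {V : Type*}

/-- The probability measure attached to a vertex `x`: uniform on its neighbors. -/
noncomputable def nbrMeasure (G : SimpleGraph V) [G.LocallyFinite] [DecidableRel G.Adj]
    (x z : V) : ℝ :=
  if G.Adj x z then ((G.degree x : ℝ))⁻¹ else 0

/-- A coupling (transfer plan) between the measures `m_x` and `m_y`. -/
def IsCoupling (G : SimpleGraph V) [G.LocallyFinite] [DecidableRel G.Adj]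
    (x y : V) (ξ : V → V → ℝ) : Prop :=
  (∀ u v, 0 ≤ ξ u v) ∧
  (∀ u v, ξ u v ≠ 0 → G.Adj x u ∧ G.Adj y v) ∧
  (∀ u, ∑ v ∈ G.neighborFinset y, ξ u v = nbrMeasure G x u) ∧
  (∀ v, ∑ u ∈ G.neighborFinset x, ξ u v = nbrMeasure G y v)

/-- The transportation distance `W₁(m_x, m_y)`. -/
noncomputable def W1 (G : SimpleGraph V) [G.LocallyFinite] [DecidableRel G.Adj]
    (x y : V) : ℝ :=
  sInf { c : ℝ | ∃ ξ : V → V → ℝ, IsCoupling G x y ξ ∧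
    c = ∑ u ∈ G.neighborFinset x, ∑ v ∈ G.neighborFinset y, (G.dist u v : ℝ) * ξ u v }

/-- Ollivier's Ricci curvature `κ(x,y) = 1 - W₁(m_x,m_y)/d(x,y)`. -/
noncomputable def ricci (G : SimpleGraph V) [G.LocallyFinite] [DecidableRel G.Adj]
    (x y : V) : ℝ :=
  1 - W1 G x y / (G.dist x y : ℝ)

/-- Positive part of a real number: `a₊ = max a 0`. -/
noncomputable def posPart' (a : ℝ) : ℝ := max a 0

/-- `♯(x,y)`: the number of common neighbors of `x` and `y`. -/
def triangles (G : SimpleGraph V) [G.LocallyFinite] [DecidableEq V] (x y : V) : ℕ :=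
  (G.neighborFinset x ∩ G.neighborFinset y).card

lemma nbrMeasure_nonneg (G : SimpleGraph V) [G.LocallyFinite] [DecidableRel G.Adj]
    (x z : V) : 0 ≤ nbrMeasure G x z := by
  unfold nbrMeasure; split <;> positivity

lemma nbrMeasure_adj (G : SimpleGraph V) [G.LocallyFinite] [DecidableRel G.Adj]
    {x z : V} (h : nbrMeasure G x z ≠ 0) : G.Adj x z := by
  by_contra hc; exact h (by simp [nbrMeasure, hc])

lemma nbrMeasure_sum (G : SimpleGraph V) [G.LocallyFinite] [DecidableRel G.Adj]
    {x y : V} (h : G.Adj x y) :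
    ∑ u ∈ G.neighborFinset x, nbrMeasure G x u = 1 := by
  have hd : 0 < G.degree x := G.degree_pos_iff_exists_adj x |>.mpr ⟨y, h⟩
  have : ∀ u ∈ G.neighborFinset x, nbrMeasure G x u = ((G.degree x : ℝ))⁻¹ := by
    intro u hu
    rw [mem_neighborFinset] at hu
    simp [nbrMeasure, hu]
  rw [Finset.sum_congr rfl this, Finset.sum_const, G.card_neighborFinset_eq_degree,
    nsmul_eq_mul]
  field_simp

/-- On a connected locally finite graph, for neighbors `x ∼ y`,
`κ(x,y) ≤ ♯(x,y)/(d_x∨d_y)`. -/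
theorem ricci_upper_bound (G : SimpleGraph V) [G.LocallyFinite]
    [DecidableRel G.Adj] [DecidableEq V]
    (hG : G.Connected) (x y : V) (hxy : G.Adj x y) :
    ricci G x y ≤ (triangles G x y : ℝ) / ((max (G.degree x) (G.degree y) : ℕ) : ℝ) := by
  have hdx : 0 < G.degree x := G.degree_pos_iff_exists_adj x |>.mpr ⟨y, hxy⟩
  have hdy : 0 < G.degree y := G.degree_pos_iff_exists_adj y |>.mpr ⟨x, hxy.symm⟩
  set D : ℝ := ((max (G.degree x) (G.degree y) : ℕ) : ℝ) with hD
  have hDpos : 0 < D := by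
    rw [hD]
    exact_mod_cast lt_max_of_lt_left hdx
  have hdist : (G.dist x y : ℝ) = 1 := by
    rw [(dist_eq_one_iff_adj (G := G)).mpr hxy]; norm_num
  -- the product coupling shows the set is nonempty
  have hne : { c : ℝ | ∃ ξ : V → V → ℝ, IsCoupling G x y ξ ∧
      c = ∑ u ∈ G.neighborFinset x, ∑ v ∈ G.neighborFinset y,
        (G.dist u v : ℝ) * ξ u v }.Nonempty := by
    refine ⟨_, fun u v => nbrMeasure G x u * nbrMeasure G y v, ⟨?_, ?_, ?_, ?_⟩, rfl⟩
    · intro u v; exact mul_nonneg (nbrMeasure_nonneg G x u) (nbrMeasure_nonneg G y v)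
    · intro u v h
      exact ⟨nbrMeasure_adj G (left_ne_zero_of_mul h),
        nbrMeasure_adj G (right_ne_zero_of_mul h)⟩
    · intro u
      rw [← Finset.mul_sum, nbrMeasure_sum G hxy.symm, mul_one]
    · intro v
      rw [← Finset.sum_mul, nbrMeasure_sum G hxy, one_mul]
  -- lower bound for every coupling cost
  have hW : 1 - (triangles G x y : ℝ) / D ≤ W1 G x y := by
    apply le_csInf hne
    rintro c ⟨ξ, ⟨hpos, hsupp, hrow, hcol⟩, rfl⟩
    set S := G.neighborFinset x
    set T := G.neighborFinset y
    have htotal : ∑ u ∈ S, ∑ v ∈ T, ξ u v = 1 := by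
      calc ∑ u ∈ S, ∑ v ∈ T, ξ u v = ∑ u ∈ S, nbrMeasure G x u :=
            Finset.sum_congr rfl fun u _ => hrow u
        _ = 1 := nbrMeasure_sum G hxy
    have hdiag : ∑ u ∈ S ∩ T, ξ u u ≤ (triangles G x y : ℝ) / D := by
      have hbound : ∀ u ∈ S ∩ T, ξ u u ≤ D⁻¹ := by
        intro u hu
        rw [Finset.mem_inter, mem_neighborFinset, mem_neighborFinset] at hu
        have h1 : ξ u u ≤ ((G.degree x : ℝ))⁻¹ := by
          have hmem : u ∈ T := by rw [mem_neighborFinset]; exact hu.2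
          have := Finset.single_le_sum (f := fun v => ξ u v) (s := T)
            (fun v _ => hpos u v) hmem
          rw [hrow u] at this
          simpa [nbrMeasure, hu.1] using this
        have h2 : ξ u u ≤ ((G.degree y : ℝ))⁻¹ := by
          have hmem : u ∈ S := by rw [mem_neighborFinset]; exact hu.1
          have := Finset.single_le_sum (f := fun u' => ξ u' u) (s := S)
            (fun u' _ => hpos u' u) hmem
          rw [hcol u] at this
          simpa [nbrMeasure, hu.2] using this
        rcases max_cases (G.degree x) (G.degree y) with ⟨h, _⟩ | ⟨h, _⟩ <;>
          simp only [hD, h] <;> assumption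
      calc ∑ u ∈ S ∩ T, ξ u u ≤ (S ∩ T).card • D⁻¹ :=
            Finset.sum_le_card_nsmul _ _ _ hbound
        _ = (triangles G x y : ℝ) / D := by
            rw [nsmul_eq_mul, div_eq_mul_inv]; rfl
    have hstep : ∑ u ∈ S, ∑ v ∈ T, ξ u v - ∑ u ∈ S ∩ T, ξ u u ≤
        ∑ u ∈ S, ∑ v ∈ T, (G.dist u v : ℝ) * ξ u v := by
      have hrewrite : ∑ u ∈ S ∩ T, ξ u u =
          ∑ u ∈ S, ∑ v ∈ T, (if u = v then ξ u v else 0) := by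
        rw [← Finset.sum_ite_mem S T (fun u => ξ u u)]
        refine Finset.sum_congr rfl fun u _ => ?_
        simp [Finset.sum_ite_eq T u (fun v => ξ u v)]
      rw [hrewrite, ← Finset.sum_sub_distrib]
      refine Finset.sum_le_sum fun u _ => ?_
      rw [← Finset.sum_sub_distrib]
      refine Finset.sum_le_sum fun v _ => ?_
      by_cases huv : u = v
      · simp [huv, SimpleGraph.dist_self]
      · have hd1 : (1 : ℝ) ≤ (G.dist u v : ℝ) := by
          exact_mod_cast hG.pos_dist_of_ne huv
        simp only [huv, if_false, sub_zero]
        nlinarith [hpos u v]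
    calc 1 - (triangles G x y : ℝ) / D
        ≤ ∑ u ∈ S, ∑ v ∈ T, ξ u v - ∑ u ∈ S ∩ T, ξ u u := by
          rw [htotal]; linarith
      _ ≤ _ := hstep
  unfold ricci
  rw [hdist, div_one]
  linarith
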